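/- arXiv:1908.10278 — 3 statements merged into one kernel-verified Lean document; each statement's English description precedes it below -/
import Mathlib

section
/- Let Y be a Poisson random variable with parameter ρ and ℓ a natural number, and suppose 0 < ρ ≤ ℓ/e. Then E[exp(max{Y−ℓ,0})] ≤ exp(ρ^ℓ/ℓ!). -/
open Real

set_option maxHeartbeats 1000000 in
/-- For a Poisson(ρ) random variable `Y` (with pmf `e^{-ρ} ρ^k / k!`) and `ℓ ∈ ℕ`,
if `0 < ρ ≤ ℓ / e` then `E[exp(max{Y - ℓ, 0})] ≤ exp(ρ^ℓ / ℓ!)`. The expectation is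
written directly as a sum over the Poisson distribution. -/
theorem poisson_mgf_truncated_bound (ρ : ℝ) (ℓ : ℕ) (hρ : 0 < ρ)
    (hρℓ : ρ ≤ (ℓ : ℝ) / Real.exp 1) :
    ∑' k : ℕ, (Real.exp (-ρ) * ρ ^ k / (k.factorial : ℝ)) *
        Real.exp (max ((k : ℝ) - (ℓ : ℝ)) 0)
      ≤ Real.exp (ρ ^ ℓ / (ℓ.factorial : ℝ)) := by
  have hℓ1 : (0:ℝ) < (ℓ:ℝ) + 1 := by positivity
  have heρ : Real.exp 1 * ρ ≤ (ℓ : ℝ) := by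
    rw [le_div_iff₀ (Real.exp_pos 1)] at hρℓ
    linarith
  set D : ℝ := Real.exp (-ρ) * ρ ^ ℓ / (ℓ.factorial : ℝ) with hD
  have hD0 : 0 ≤ D := by positivity
  set r : ℝ := Real.exp 1 * ρ / ((ℓ:ℝ) + 1) with hr
  have hr0 : 0 < r := by positivity
  have hr1 : r < 1 := by
    rw [hr, div_lt_one hℓ1]; linarith
  set p : ℕ → ℝ := fun k => Real.exp (-ρ) * ρ ^ k / (k.factorial : ℝ) with hp
  have hpnn : ∀ k, 0 ≤ p k := fun k => by positivity
  have hsp : Summable p := by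
    have := (Real.summable_pow_div_factorial ρ).mul_left (Real.exp (-ρ))
    simpa [hp, mul_div_assoc] using this
  have htp : ∑' k, p k = 1 := by
    have h1 : ∑' k : ℕ, ρ ^ k / (k.factorial : ℝ) = Real.exp ρ := by
      rw [Real.exp_eq_exp_ℝ, NormedSpace.exp_eq_tsum_div]
    calc ∑' k, p k = Real.exp (-ρ) * ∑' k : ℕ, ρ ^ k / (k.factorial : ℝ) := by
          rw [← tsum_mul_left]
          exact tsum_congr fun k => mul_div_assoc _ _ _
      _ = 1 := by rw [h1, ← Real.exp_add]; simp
  set q : ℕ → ℝ := fun k => if ℓ < k then p k * Real.exp ((k:ℝ) - ℓ) else 0 with hq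
  set c : ℕ → ℝ := fun k => if ℓ < k then D * r ^ (k - ℓ) else 0 with hc
  have hqnn : ∀ k, 0 ≤ q k := by
    intro k; rw [hq]; dsimp only; split
    · have := hpnn k; positivity
    · exact le_rfl
  have hqc : ∀ k, q k ≤ c k := by
    intro k
    rw [hq, hc]; dsimp only
    split
    · rename_i hk
      set m := k - ℓ with hm
      have hk' : k = ℓ + m := by omega
      have e1 : Real.exp ((k:ℝ) - (ℓ:ℝ)) = Real.exp 1 ^ m := by
        have : (k:ℝ) - (ℓ:ℝ) = (m:ℝ) * 1 := by rw [hk']; push_cast; ring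
        rw [this, Real.exp_nat_mul]
      have hfac : (ℓ.factorial : ℝ) * ((ℓ:ℝ)+1) ^ m ≤ (k.factorial : ℝ) := by
        have h := Nat.factorial_mul_pow_le_factorial (m := ℓ) (n := m)
        rw [hk']; exact_mod_cast h
      have lhs_eq : p k * Real.exp ((k:ℝ) - (ℓ:ℝ))
          = Real.exp (-ρ) * ρ ^ ℓ * (Real.exp 1 * ρ) ^ m / (k.factorial : ℝ) := by
        rw [hp]; dsimp only
        rw [e1, hk', pow_add, mul_pow]; ring
      have rhs_eq : D * r ^ m
          = Real.exp (-ρ) * ρ ^ ℓ * (Real.exp 1 * ρ) ^ m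
              / ((ℓ.factorial : ℝ) * ((ℓ:ℝ)+1) ^ m) := by
        rw [hD, hr, div_pow]
        have h1 : ((ℓ.factorial : ℝ)) ≠ 0 := by positivity
        have h2 : ((ℓ:ℝ)+1) ^ m ≠ 0 := by positivity
        field_simp
        try ring
      rw [lhs_eq, rhs_eq]
      have hA : 0 ≤ Real.exp (-ρ) * ρ ^ ℓ * (Real.exp 1 * ρ) ^ m := by positivity
      have hB : (0:ℝ) < (ℓ.factorial : ℝ) * ((ℓ:ℝ)+1) ^ m := by positivity
      exact div_le_div_of_nonneg_left hA hB hfac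
    · exact le_rfl
  have hcnn : ∀ k, 0 ≤ c k := by
    intro k; rw [hc]; dsimp only; split
    · positivity
    · exact le_rfl
  have hsc : Summable c := by
    refine Summable.of_nonneg_of_le hcnn (f := fun k => (D / r ^ ℓ) * r ^ k) ?_ ?_
    · intro k
      rw [hc]; dsimp only; split
      · rename_i hk
        have : r ^ (k - ℓ) = r ^ k / r ^ ℓ := by
          rw [eq_div_iff (by positivity), ← pow_add]
          congr 1; omega
        rw [this, hD]
        apply le_of_eq
        ring
      · positivity
    · exact (summable_geometric_of_lt_one hr0.le hr1).mul_left _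
  have hsq : Summable q := Summable.of_nonneg_of_le hqnn hqc hsc
  have htc : ∑' k, c k = D * r * (1 - r)⁻¹ := by
    rw [← Summable.sum_add_tsum_nat_add (ℓ + 1) hsc]
    have h0 : ∑ i ∈ Finset.range (ℓ + 1), c i = 0 := by
      refine Finset.sum_eq_zero fun i hi => ?_
      rw [hc]; dsimp only
      rw [if_neg (by simp at hi; omega)]
    have h1 : ∀ i : ℕ, c (i + (ℓ + 1)) = D * r * r ^ i := by
      intro i
      rw [hc]; dsimp only
      rw [if_pos (by omega)]
      have : i + (ℓ + 1) - ℓ = i + 1 := by omega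
      rw [this, pow_succ]; ring
    rw [h0, zero_add]
    rw [tsum_congr h1, tsum_mul_left, tsum_geometric_of_lt_one hr0.le hr1]
  have htcle : ∑' k, c k ≤ ρ ^ ℓ / (ℓ.factorial : ℝ) := by
    rw [htc]
    have h1mr : (1:ℝ)/((ℓ:ℝ)+1) ≤ 1 - r := by
      have : 1 - r = ((ℓ:ℝ) + 1 - Real.exp 1 * ρ) / ((ℓ:ℝ)+1) := by
        rw [hr]; field_simp
      rw [this]
      gcongr
      linarith
    have hinv : (1 - r)⁻¹ ≤ (ℓ:ℝ) + 1 := by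
      have h0 : (0:ℝ) < 1/((ℓ:ℝ)+1) := by positivity
      calc (1 - r)⁻¹ ≤ ((1:ℝ)/((ℓ:ℝ)+1))⁻¹ := by
            apply inv_anti₀ h0 h1mr
        _ = (ℓ:ℝ) + 1 := by rw [one_div, inv_inv]
    have hfin : Real.exp (-ρ) * (Real.exp 1 * ρ) ≤ 1 := by
      have h := Real.add_one_le_exp (ρ - 1)
      have hee : Real.exp (-ρ) * Real.exp 1 = Real.exp (1 - ρ) := by
        rw [← Real.exp_add]; ring_nf
      calc Real.exp (-ρ) * (Real.exp 1 * ρ) = Real.exp (1 - ρ) * ρ := by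
            rw [← hee]; ring
        _ ≤ Real.exp (1 - ρ) * Real.exp (ρ - 1) :=
            mul_le_mul_of_nonneg_left (by linarith) (Real.exp_pos _).le
        _ = 1 := by rw [← Real.exp_add]; norm_num
    calc D * r * (1 - r)⁻¹ ≤ D * r * ((ℓ:ℝ) + 1) :=
          mul_le_mul_of_nonneg_left hinv (by positivity)
      _ = D * (Real.exp 1 * ρ) := by
          rw [hr]; field_simp
      _ = ρ ^ ℓ / (ℓ.factorial : ℝ) * (Real.exp (-ρ) * (Real.exp 1 * ρ)) := by
          rw [hD]; ring
      _ ≤ ρ ^ ℓ / (ℓ.factorial : ℝ) * 1 :=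
          mul_le_mul_of_nonneg_left hfin (by positivity)
      _ = ρ ^ ℓ / (ℓ.factorial : ℝ) := mul_one _
  have htq : ∑' k, q k ≤ ρ ^ ℓ / (ℓ.factorial : ℝ) :=
    le_trans (Summable.tsum_le_tsum hqc hsq hsc) htcle
  -- pointwise bound on the summand
  have hale : ∀ k : ℕ, p k * Real.exp (max ((k:ℝ) - (ℓ:ℝ)) 0) ≤ p k + q k := by
    intro k
    by_cases hk : ℓ < k
    · have hmax : max ((k:ℝ) - (ℓ:ℝ)) 0 = (k:ℝ) - (ℓ:ℝ) := by
        apply max_eq_left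
        have : (ℓ:ℝ) ≤ (k:ℝ) := by exact_mod_cast hk.le
        linarith
      rw [hmax, hq]; dsimp only; rw [if_pos hk]
      linarith [hpnn k]
    · have hmax : max ((k:ℝ) - (ℓ:ℝ)) 0 = 0 := by
        apply max_eq_right
        have : (k:ℝ) ≤ (ℓ:ℝ) := by exact_mod_cast Nat.not_lt.mp hk
        linarith
      rw [hmax, Real.exp_zero, mul_one, hq]; dsimp only; rw [if_neg hk, add_zero]
  have hanonneg : ∀ k : ℕ, 0 ≤ p k * Real.exp (max ((k:ℝ) - (ℓ:ℝ)) 0) := by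
    intro k; have := hpnn k; positivity
  have hspq : Summable (fun k => p k + q k) := hsp.add hsq
  have hsa : Summable (fun k : ℕ => p k * Real.exp (max ((k:ℝ) - (ℓ:ℝ)) 0)) :=
    Summable.of_nonneg_of_le hanonneg hale hspq
  calc ∑' k : ℕ, (Real.exp (-ρ) * ρ ^ k / (k.factorial : ℝ)) *
        Real.exp (max ((k : ℝ) - (ℓ : ℝ)) 0)
      ≤ ∑' k : ℕ, (p k + q k) := Summable.tsum_le_tsum hale hsa hspq
    _ = (∑' k, p k) + ∑' k, q k := Summable.tsum_add hsp hsq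
    _ ≤ 1 + ρ ^ ℓ / (ℓ.factorial : ℝ) := by rw [htp]; linarith [htq]
    _ ≤ Real.exp (ρ ^ ℓ / (ℓ.factorial : ℝ)) := by
        have := Real.add_one_le_exp (ρ ^ ℓ / (ℓ.factorial : ℝ))
        linarith
end

section
/- Let Y₁, …, Yₙ be i.i.d. Poisson random variables with parameter ρ > 0, let ℓ ∈ ℕ with ρ ≤ ℓ/e, and set Y = Σ_{k=1}^n max{Y_k − ℓ, 0}. Then for β = 2n·ρ^ℓ/ℓ!, P(Y > β) < exp(−β/2). -/
open MeasureTheory ProbabilityTheory Real Finset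
open scoped NNReal ENNReal Nat

/-! Write `c = ρ^ℓ/ℓ!` and `q = eρ/(ℓ+1)`; the hypothesis `ρ ≤ ℓ/e` gives `q < 1`. Since
`ρ^(ℓ+m)/(ℓ+m)! ≤ c (ρ/(ℓ+1))^m`, the part of `E[e^{(Y_k-ℓ)⁺}]` coming from `Y_k > ℓ` is at most
the geometric series `e^{-ρ} c (q + q² + ⋯)`, which is `≤ c` because `ρ e^{1-ρ} ≤ 1`. Hence
`E[e^{(Y_k-ℓ)⁺}] ≤ 1 + c < e^c`, independence gives `E[e^Y] < e^{nc} = e^{β/2}`, and Markov's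
inequality for `e^Y` gives `P(Y > β) < e^{-β} e^{β/2}`. -/

lemma pow_add_div_factorial_le {x : ℝ} (hx : 0 ≤ x) (ℓ m : ℕ) :
    x ^ (ℓ + m) / (ℓ + m)! ≤ x ^ ℓ / ℓ ! * (x / (ℓ + 1)) ^ m := by
  have hfac : (ℓ ! : ℝ) * ((ℓ : ℝ) + 1) ^ m ≤ (ℓ + m)! := by
    exact_mod_cast Nat.factorial_mul_pow_le_factorial
  calc x ^ (ℓ + m) / (ℓ + m)! ≤ x ^ (ℓ + m) / (ℓ ! * ((ℓ : ℝ) + 1) ^ m) := by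
        gcongr
    _ = x ^ ℓ / ℓ ! * (x / (ℓ + 1)) ^ m := by rw [pow_add, div_pow]; field_simp

lemma exp_neg_mul_le_one_sub {x : ℝ} {ℓ : ℕ} (h : exp 1 * x ≤ ℓ) :
    exp (-x) * (exp 1 * x / (ℓ + 1)) ≤ 1 - exp 1 * x / (ℓ + 1) := by
  have hℓ : (0 : ℝ) < ℓ + 1 := by positivity
  have hx : exp (-x) * (exp 1 * x) ≤ 1 := by
    have h1 := add_one_le_exp (x - 1)
    have h2 : exp (-x) * exp 1 * exp (x - 1) = 1 := by
      rw [← exp_add, ← exp_add]; norm_num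
    nlinarith [mul_pos (exp_pos (-x)) (exp_pos 1)]
  rw [← mul_div_assoc, div_le_iff₀ hℓ, sub_mul, div_mul_cancel₀ _ hℓ.ne']
  linarith

lemma tsum_exp_mul_poisson_tail_le {r : ℝ≥0} {ℓ : ℕ} (h : exp 1 * r ≤ ℓ) :
    ∑' i : ℕ, ENNReal.ofReal (exp (i + 1) * (exp (-r) * r ^ (i + (ℓ + 1)) / (i + (ℓ + 1))!))
      ≤ ENNReal.ofReal (r ^ ℓ / ℓ !) := by
  set c : ℝ := r ^ ℓ / (ℓ ! : ℝ)
  set q : ℝ := exp 1 * r / (ℓ + 1)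
  have hc : 0 ≤ c := div_nonneg (pow_nonneg r.2 _) (Nat.cast_nonneg _)
  have hq₀ : 0 ≤ q := by positivity
  have hq : q < 1 := by rw [div_lt_one (by positivity)]; linarith
  have hterm : ∀ i : ℕ, exp (i + 1) * (exp (-r) * r ^ (i + (ℓ + 1)) / (i + (ℓ + 1))!)
      ≤ exp (-r) * c * q * q ^ i := fun i => by
    have hexp : exp (i + 1) = exp 1 ^ (i + 1) := by
      rw [← exp_nat_mul]; push_cast; ring_nf
    calc exp (i + 1) * (exp (-r) * r ^ (i + (ℓ + 1)) / (i + (ℓ + 1))!)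
        = exp 1 ^ (i + 1) * exp (-r) * ((r : ℝ) ^ (ℓ + (i + 1)) / (ℓ + (i + 1))!) := by
          rw [hexp, show i + (ℓ + 1) = ℓ + (i + 1) by ring]; ring
      _ ≤ exp 1 ^ (i + 1) * exp (-r) * (c * (r / (ℓ + 1)) ^ (i + 1)) := by
          gcongr; exact pow_add_div_factorial_le r.2 ℓ (i + 1)
      _ = exp (-r) * c * q * q ^ i := by
          rw [mul_assoc _ q, ← pow_succ', show q = exp 1 * (r / (ℓ + 1)) from mul_div_assoc ..,
            mul_pow]
          ring
  have hsum : HasSum (fun i : ℕ => exp (-r) * c * q * q ^ i) (exp (-r) * c * q * (1 - q)⁻¹) :=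
    (hasSum_geometric_of_lt_one hq₀ hq).mul_left _
  calc _ ≤ ∑' i : ℕ, ENNReal.ofReal (exp (-r) * c * q * q ^ i) :=
        ENNReal.tsum_le_tsum fun i => ENNReal.ofReal_le_ofReal (hterm i)
    _ = ENNReal.ofReal (exp (-r) * c * q * (1 - q)⁻¹) := by
        rw [← ENNReal.ofReal_tsum_of_nonneg (fun i => by positivity) hsum.summable, hsum.tsum_eq]
    _ ≤ ENNReal.ofReal c := by
        refine ENNReal.ofReal_le_ofReal ?_
        calc exp (-r) * c * q * (1 - q)⁻¹ = c * (exp (-r) * q / (1 - q)) := by ring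
          _ ≤ c := mul_le_of_le_one_right hc
            ((div_le_one (by linarith)).mpr (exp_neg_mul_le_one_sub h))

lemma lintegral_exp_tsub_poissonMeasure_le {r : ℝ≥0} {ℓ : ℕ} (h : (r : ℝ) ≤ ℓ / exp 1) :
    ∫⁻ j, ENNReal.ofReal (exp ((j - ℓ : ℕ) : ℝ)) ∂poissonMeasure r
      ≤ ENNReal.ofReal (1 + r ^ ℓ / ℓ !) := by
  have h' : exp 1 * r ≤ ℓ := by rw [mul_comm]; exact (le_div_iff₀ (exp_pos 1)).mp h
  rw [lintegral_countable', ← ENNReal.summable.sum_add_tsum_nat_add' (k := ℓ + 1),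
    ENNReal.ofReal_add zero_le_one (by positivity), ENNReal.ofReal_one]
  gcongr
  · calc ∑ j ∈ range (ℓ + 1), ENNReal.ofReal (exp ((j - ℓ : ℕ) : ℝ)) * poissonMeasure r {j}
          = ∑ j ∈ range (ℓ + 1), poissonMeasure r {j} := by
            refine sum_congr rfl fun j hj => ?_
            rw [Nat.sub_eq_zero_of_le (Nat.lt_succ_iff.mp (mem_range.mp hj))]
            simp
        _ ≤ 1 := by rw [sum_measure_singleton]; exact prob_le_one
  · refine (le_of_eq (tsum_congr fun i => ?_)).trans (tsum_exp_mul_poisson_tail_le h')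
    rw [poissonMeasure_singleton, ← ENNReal.ofReal_mul (exp_pos _).le,
      show i + (ℓ + 1) - ℓ = i + 1 by omega]
    push_cast; ring_nf

namespace ProbabilityTheory

variable {Ω : Type*} {mΩ : MeasurableSpace Ω} {μ : Measure Ω}

lemma hasLaw_poissonMeasure_of_measure_eq {Y : Ω → ℕ} (hY : Measurable Y) {r : ℝ≥0}
    (h : ∀ j, μ {ω | Y ω = j} = ENNReal.ofReal (exp (-r) * r ^ j / j !)) :
    HasLaw Y (poissonMeasure r) μ where
  aemeasurable := hY.aemeasurable
  map_eq := Measure.ext_of_singleton fun j => by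
    rw [Measure.map_apply hY (measurableSet_singleton j), poissonMeasure_singleton]
    exact h j

lemma lintegral_exp_tsub_le_of_measure_eq {Y : Ω → ℕ} (hY : Measurable Y) {ρ : ℝ} {ℓ : ℕ}
    (hρ : 0 ≤ ρ) (hρℓ : ρ ≤ ℓ / exp 1)
    (h : ∀ j, μ {ω | Y ω = j} = ENNReal.ofReal (exp (-ρ) * ρ ^ j / j !)) :
    ∫⁻ ω, ENNReal.ofReal (exp ((Y ω - ℓ : ℕ) : ℝ)) ∂μ ≤ ENNReal.ofReal (1 + ρ ^ ℓ / ℓ !) := by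
  have hρ' : (ρ.toNNReal : ℝ) = ρ := Real.coe_toNNReal ρ hρ
  have hlaw := hasLaw_poissonMeasure_of_measure_eq hY (r := ρ.toNNReal) (by rwa [hρ'])
  rw [hlaw.lintegral_comp (f := fun j => ENNReal.ofReal (exp ((j - ℓ : ℕ) : ℝ)))
    measurable_from_top.aemeasurable]
  simpa only [hρ'] using lintegral_exp_tsub_poissonMeasure_le (r := ρ.toNNReal) (by rwa [hρ'])

lemma integrable_exp_mul_of_lintegral_lt_top {X : Ω → ℝ} {t : ℝ} (hX : AEMeasurable X μ)
    (h : ∫⁻ ω, ENNReal.ofReal (exp (t * X ω)) ∂μ < ∞) :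
    Integrable (fun ω => exp (t * X ω)) μ :=
  ⟨(hX.const_mul t).exp.aestronglyMeasurable,
    (hasFiniteIntegral_iff_ofReal (.of_forall fun _ => (exp_pos _).le)).mpr h⟩

lemma mgf_le_of_lintegral_le {X : Ω → ℝ} {t M : ℝ} (hX : AEMeasurable X μ) (hM : 0 ≤ M)
    (h : ∫⁻ ω, ENNReal.ofReal (exp (t * X ω)) ∂μ ≤ ENNReal.ofReal M) :
    mgf X μ t ≤ M := by
  rw [mgf, integral_eq_lintegral_of_nonneg_ae (.of_forall fun _ => (exp_pos _).le)
    (hX.const_mul t).exp.aestronglyMeasurable]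
  exact ENNReal.toReal_le_of_le_ofReal hM h

lemma iIndepFun.measureReal_sum_ge_le {ι : Type*} {X : ι → Ω → ℝ} (h_indep : iIndepFun X μ)
    (h_meas : ∀ i, Measurable (X i)) {t M : ℝ} (ht : 0 ≤ t)
    (h_int : ∀ i, Integrable (fun ω => exp (t * X i ω)) μ) (h_mgf : ∀ i, mgf (X i) μ t ≤ M)
    (s : Finset ι) (ε : ℝ) :
    μ.real {ω | ε ≤ ∑ i ∈ s, X i ω} ≤ exp (-t * ε) * M ^ #s := by
  have := h_indep.isProbabilityMeasure
  have h_chernoff := measure_ge_le_exp_mul_mgf ε ht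
    (h_indep.integrable_exp_mul_sum h_meas (s := s) fun i _ => h_int i)
  simp only [Finset.sum_apply] at h_chernoff
  refine h_chernoff.trans (mul_le_mul_of_nonneg_left ?_ (exp_pos _).le)
  rw [h_indep.mgf_sum h_meas, ← prod_const]
  exact prod_le_prod (fun i _ => mgf_nonneg) fun i _ => h_mgf i

end ProbabilityTheory

/-- If `Y₁,…,Yₙ` are i.i.d. Poisson(ρ) with `0 < ρ ≤ ℓ/e`, and
`Y = Σ_k max{Y_k - ℓ, 0}`, then with `β = 2n ρ^ℓ/ℓ!` we have `P(Y > β) < exp(-β/2)`. -/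
theorem thinned_overflow_bound
    {Ω : Type*} [MeasurableSpace Ω] (μ : Measure Ω) [IsProbabilityMeasure μ]
    (n : ℕ) (ρ : ℝ) (ℓ : ℕ) (hρ : 0 < ρ) (hρℓ : ρ ≤ (ℓ : ℝ) / Real.exp 1)
    (Y : Fin n → Ω → ℕ)
    (hmeas : ∀ i, Measurable (Y i))
    (hindep : iIndepFun Y μ)
    (hdist : ∀ i, ∀ j : ℕ,
      μ {ω | Y i ω = j} = ENNReal.ofReal (Real.exp (-ρ) * ρ ^ j / (j.factorial : ℝ))) :
    μ {ω | 2 * (n : ℝ) * ρ ^ ℓ / (ℓ.factorial : ℝ)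
            < ∑ i, ((Y i ω - ℓ : ℕ) : ℝ)}
      < ENNReal.ofReal (Real.exp (-(2 * (n : ℝ) * ρ ^ ℓ / (ℓ.factorial : ℝ)) / 2)) := by
  obtain rfl | hn := n.eq_zero_or_pos
  · simp
  set c := ρ ^ ℓ / (ℓ ! : ℝ)
  set β := 2 * (n : ℝ) * ρ ^ ℓ / (ℓ ! : ℝ)
  let X : Fin n → Ω → ℝ := fun i ω => ((Y i ω - ℓ : ℕ) : ℝ)
  have hX : ∀ i, Measurable (X i) := fun i =>
    (measurable_from_top (f := fun j : ℕ => ((j - ℓ : ℕ) : ℝ))).comp (hmeas i)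
  have hX_indep : iIndepFun X μ :=
    hindep.comp (fun _ j => ((j - ℓ : ℕ) : ℝ)) fun _ => measurable_from_top
  have hlint (i : Fin n) : ∫⁻ ω, ENNReal.ofReal (exp (1 * X i ω)) ∂μ ≤ ENNReal.ofReal (1 + c) := by
    simpa only [one_mul] using lintegral_exp_tsub_le_of_measure_eq (hmeas i) hρ.le hρℓ (hdist i)
  have h_chernoff := hX_indep.measureReal_sum_ge_le hX zero_le_one
    (fun i => integrable_exp_mul_of_lintegral_lt_top (hX i).aemeasurable
      ((hlint i).trans_lt ENNReal.ofReal_lt_top))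
    (fun i => mgf_le_of_lintegral_le (hX i).aemeasurable (by positivity) (hlint i)) univ β
  have hpow : (1 + c) ^ n < exp (β / 2) := by
    calc (1 + c) ^ n < exp c ^ n :=
          pow_lt_pow_left₀ (by linarith [add_one_lt_exp (by positivity : c ≠ 0)]) (by positivity)
            hn.ne'
      _ = exp (β / 2) := by rw [← exp_nat_mul]; congr 1; ring
  rw [← ofReal_measureReal, ENNReal.ofReal_lt_ofReal_iff (exp_pos _)]
  calc μ.real {ω | β < ∑ i, X i ω} ≤ μ.real {ω | β ≤ ∑ i, X i ω} :=
        measureReal_mono fun _ => le_of_lt (α := ℝ)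
    _ ≤ exp (-1 * β) * (1 + c) ^ n := by simpa using h_chernoff
    _ < exp (-1 * β) * exp (β / 2) := by gcongr
    _ = exp (-β / 2) := by rw [← exp_add]; ring_nf
end

section
/- Define real sequences θ₁ = ρ/s₁ and, for i ≥ 1, γ_i = n·∏_{j=1}^i (θ_j/(4e))^{k_j} and θ_{i+1} = (1/s_{i+1})·∏_{j=1}^i (θ_j/(4e))^{k_j}, where s_{i+1} < dℓ for all i, the k_j are positive integers, and 0 < ρ, with ρ̃ = min{1, ρ}. Then for all i ≥ 1, θ_{i+1}/(4e) > (ρ̃/(4edℓ))^{∏_{j=1}^i (k_j+1)} and γ_i > n·(ρ̃/(4edℓ))^{∏_{j=1}^i (k_j+2)}. -/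
/-!
With `B = ρ̃/(4edℓ)`, `x_j = θ_j/(4e)` and `P_i = ∏_{j ≤ i} x_j^{k_j}`, the recursion reads
`x_{i+1} = P_i/(4e·s_{i+1}) > B·P_i` (as `s_{i+1} < dℓ` and `ρ̃ ≤ 1`), and `x₁ > B`. Hence
`B^{E_i} ≤ B·P_i` for `E_i = ∏_{j ≤ i} (k_j + 1)` by induction, since
`E_{i+1} = E_i + E_i·k_{i+1}` and `x_{i+1} ≥ B·P_i ≥ B^{E_i}`. Both bounds follow from this
inequality, the second because `B < 1` and `E_i ≤ ∏_{j ≤ i} (k_j + 2)`.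
-/

open Real Finset

section RecursiveProducts

variable {K : Type*} [Field K] [LinearOrder K] [IsStrictOrderedRing K]
  {B : K} {x a : ℕ → K} (k : ℕ → ℕ)

theorem pow_prod_succ_le_mul_prod (hB : 0 < B) (hx1 : B ≤ x 1) (ha : ∀ i, 1 ≤ i → B ≤ a i)
    (hx : ∀ i, 1 ≤ i → x (i + 1) = a i * ∏ j ∈ Icc 1 i, x j ^ k j) (i : ℕ) :
    B ^ ∏ j ∈ Icc 1 i, (k j + 1) ≤ B * ∏ j ∈ Icc 1 i, x j ^ k j := by
  induction i with
  | zero => simp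
  | succ i ih =>
    set P := ∏ j ∈ Icc 1 i, x j ^ k j
    have hBP : 0 < B * P := (pow_pos hB _).trans_le ih
    have hx_succ : B * P ≤ x (i + 1) := by
      rcases Nat.eq_zero_or_pos i with rfl | hi
      · simpa [P] using hx1
      · rw [hx i hi]
        exact mul_le_mul_of_nonneg_right (ha i hi) (pos_of_mul_pos_right hBP hB.le).le
    rw [prod_Icc_succ_top (by omega), prod_Icc_succ_top (by omega)]
    calc B ^ ((∏ j ∈ Icc 1 i, (k j + 1)) * (k (i + 1) + 1))
        = (B ^ ∏ j ∈ Icc 1 i, (k j + 1)) * (B ^ ∏ j ∈ Icc 1 i, (k j + 1)) ^ k (i + 1) := by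
          rw [pow_mul, pow_succ, mul_comm]
      _ ≤ B * P * x (i + 1) ^ k (i + 1) :=
          mul_le_mul ih (pow_le_pow_left₀ (by positivity) (ih.trans hx_succ) _)
            (by positivity) hBP.le
      _ = B * (P * x (i + 1) ^ k (i + 1)) := mul_assoc _ _ _

theorem pow_prod_succ_lt (hB : 0 < B) (hx1 : B < x 1) (ha : ∀ i, 1 ≤ i → B < a i)
    (hx : ∀ i, 1 ≤ i → x (i + 1) = a i * ∏ j ∈ Icc 1 i, x j ^ k j) (i : ℕ) :
    B ^ ∏ j ∈ Icc 1 i, (k j + 1) < x (i + 1) := by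
  have hle := pow_prod_succ_le_mul_prod k hB hx1.le (fun i hi => (ha i hi).le) hx i
  rcases Nat.eq_zero_or_pos i with rfl | hi
  · simpa using hx1
  · have hP : 0 < ∏ j ∈ Icc 1 i, x j ^ k j :=
      pos_of_mul_pos_right ((pow_pos hB _).trans_le hle) hB.le
    rw [hx i hi]
    exact hle.trans_lt (mul_lt_mul_of_pos_right (ha i hi) hP)

theorem pow_prod_add_two_lt_prod (hB : 0 < B) (hB1 : B < 1) (hx1 : B ≤ x 1)
    (ha : ∀ i, 1 ≤ i → B ≤ a i)
    (hx : ∀ i, 1 ≤ i → x (i + 1) = a i * ∏ j ∈ Icc 1 i, x j ^ k j) (i : ℕ) :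
    B ^ ∏ j ∈ Icc 1 i, (k j + 2) < ∏ j ∈ Icc 1 i, x j ^ k j := by
  have hexp : ∏ j ∈ Icc 1 i, (k j + 1) < ∏ j ∈ Icc 1 i, (k j + 2) + 1 :=
    Nat.lt_succ_of_le (prod_le_prod' fun j _ => by omega)
  refine lt_of_mul_lt_mul_left ?_ hB.le
  calc B * B ^ ∏ j ∈ Icc 1 i, (k j + 2) = B ^ (∏ j ∈ Icc 1 i, (k j + 2) + 1) := by
        rw [pow_succ, mul_comm]
    _ < B ^ ∏ j ∈ Icc 1 i, (k j + 1) := pow_lt_pow_right_of_lt_one₀ hB hB1 hexp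
    _ ≤ _ := pow_prod_succ_le_mul_prod k hB hx1 ha hx i

end RecursiveProducts

theorem theta_gamma_lower_bounds_general (d ℓ n : ℕ) (hn : 1 ≤ n)
    (ρ : ℝ) (hρ : 0 < ρ) (s : ℕ → ℝ) (hs : ∀ j, 0 < s j ∧ s j < (d : ℝ) * ℓ)
    (k : ℕ → ℕ)
    (θ : ℕ → ℝ) (hθ1 : θ 1 = ρ / s 1)
    (hθ : ∀ i, 1 ≤ i →
      θ (i + 1) = (1 / s (i + 1)) * ∏ j ∈ Finset.Icc 1 i, (θ j / (4 * Real.exp 1)) ^ (k j))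
    (γ : ℕ → ℝ)
    (hγ : ∀ i, 1 ≤ i →
      γ i = (n : ℝ) * ∏ j ∈ Finset.Icc 1 i, (θ j / (4 * Real.exp 1)) ^ (k j)) :
    ∀ i, 1 ≤ i →
      (min 1 ρ / (4 * Real.exp 1 * d * ℓ)) ^ (∏ j ∈ Finset.Icc 1 i, (k j + 1))
          < θ (i + 1) / (4 * Real.exp 1) ∧
        (n : ℝ) * (min 1 ρ / (4 * Real.exp 1 * d * ℓ)) ^ (∏ j ∈ Finset.Icc 1 i, (k j + 2))
          < γ i := by
  intro i hi
  set c := 4 * exp 1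
  have hc : 1 < c := by have := add_one_lt_exp one_ne_zero; linarith
  have hdℓ : (1 : ℝ) ≤ d * ℓ := by
    have : 0 < d * ℓ := by exact_mod_cast (hs 1).1.trans (hs 1).2
    exact_mod_cast this
  set B := min 1 ρ / (c * d * ℓ)
  have hB : 0 < B := div_pos (lt_min one_pos hρ) (by rw [mul_assoc]; positivity)
  have hB1 : B < 1 := by
    rw [div_lt_one (by rw [mul_assoc]; positivity), mul_assoc]
    nlinarith [min_le_left 1 ρ]
  have hB_lt : ∀ r j, 0 < r → min 1 ρ ≤ r → B < r / (c * s j) := fun r j hr hρr =>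
    calc B ≤ r / (c * (d * ℓ)) := by
          rw [← mul_assoc]; exact div_le_div_of_nonneg_right hρr (by positivity)
      _ < r / (c * s j) := by gcongr; exacts [mul_pos (by positivity) (hs j).1, (hs j).2]
  have hx1 : B < θ 1 / c := by
    rw [hθ1, div_div, mul_comm]; exact hB_lt ρ 1 hρ (min_le_right 1 ρ)
  have ha : ∀ i, 1 ≤ i → B < 1 / (c * s (i + 1)) := fun i _ =>
    hB_lt 1 _ one_pos (min_le_left 1 ρ)
  have hx : ∀ i, 1 ≤ i →
      θ (i + 1) / c = 1 / (c * s (i + 1)) * ∏ j ∈ Icc 1 i, (θ j / c) ^ k j := by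
    intro i hi; rw [hθ i hi]; ring
  refine ⟨pow_prod_succ_lt (x := fun j => θ j / c) k hB hx1 ha hx i, ?_⟩
  rw [hγ i hi]
  have hP := pow_prod_add_two_lt_prod (x := fun j => θ j / c) k hB hB1 hx1.le
    (fun i hi => (ha i hi).le) hx i
  exact mul_lt_mul_of_pos_left hP (by exact_mod_cast hn)

/-- Inductive lower bounds on the sequences `θ_i` and `γ_i` from the lower-bound proof:
with `θ₁ = ρ/s₁`, `γ_i = n·∏_{j=1}^i (θ_j/(4e))^{k_j}`,
`θ_{i+1} = (1/s_{i+1})·∏_{j=1}^i (θ_j/(4e))^{k_j}`, `0 < s_j < dℓ`, `k_j ≥ 1`, `ρ̃ = min 1 ρ`,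
we have `θ_{i+1}/(4e) > (ρ̃/(4edℓ))^{∏_{j=1}^i (k_j+1)}` and
`γ_i > n·(ρ̃/(4edℓ))^{∏_{j=1}^i (k_j+2)}` for all `i ≥ 1`. -/
theorem theta_gamma_lower_bounds (d ℓ n : ℕ) (hd : 1 ≤ d) (hℓ : 1 ≤ ℓ) (hn : 1 ≤ n)
    (ρ : ℝ) (hρ : 0 < ρ) (s : ℕ → ℝ) (hs : ∀ j, 0 < s j ∧ s j < (d : ℝ) * ℓ)
    (k : ℕ → ℕ) (hk : ∀ j, 1 ≤ k j)
    (θ : ℕ → ℝ) (hθ1 : θ 1 = ρ / s 1)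
    (hθ : ∀ i, 1 ≤ i →
      θ (i + 1) = (1 / s (i + 1)) * ∏ j ∈ Finset.Icc 1 i, (θ j / (4 * Real.exp 1)) ^ (k j))
    (γ : ℕ → ℝ)
    (hγ : ∀ i, 1 ≤ i →
      γ i = (n : ℝ) * ∏ j ∈ Finset.Icc 1 i, (θ j / (4 * Real.exp 1)) ^ (k j)) :
    ∀ i, 1 ≤ i →
      (min 1 ρ / (4 * Real.exp 1 * d * ℓ)) ^ (∏ j ∈ Finset.Icc 1 i, (k j + 1))
          < θ (i + 1) / (4 * Real.exp 1) ∧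
        (n : ℝ) * (min 1 ρ / (4 * Real.exp 1 * d * ℓ)) ^ (∏ j ∈ Finset.Icc 1 i, (k j + 2))
          < γ i :=
  theta_gamma_lower_bounds_general d ℓ n hn ρ hρ s hs k θ hθ1 hθ γ hγ
end
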